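/- Let (G,B,m,w) be a connected weighted finite graph with boundary B, |B| ≥ 2 (no assumption that E(B,B)=∅). Then σ₂ ≥ w₀·V_B / ((V_B − m₀)² · d_B), where V_B = Σ_{x∈B} m_x, m₀ = min_{x∈B} m_x, w₀ = min_{e∈E} w_e, and d_B = max{d(x,y) : x,y ∈ B}. -/

import Mathlib

/-!
Let `u` be admissible for `σ₂`, with maximum `u x₀` and minimum `u y₀` on `B`. Since the
boundary values of `u` have mean zero and lie in `[u y₀, u x₀]`, the Bhatia–Davis inequality
gives `4 ⟨u,u⟩_B ≤ (u x₀ - u y₀)² V_B`. Along a shortest path from `y₀` to `x₀`, of length at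
most `d_B`, Cauchy–Schwarz gives `w₀ (u x₀ - u y₀)² ≤ d_B E(u)`. Finally `V_B ≥ 2 m₀` because
`|B| ≥ 2`, so `V_B² ≤ 4 (V_B - m₀)²`.
-/

open Finset

variable {V : Type*}

/-- The Dirichlet energy `⟨du,du⟩ = ∑_{{x,y}∈E} (u y - u x)^2 w_{xy}` of a function `u`,
where the edge weight `w` is symmetric and vanishes on non-adjacent pairs. -/
noncomputable def energy [Fintype V] (w : V → V → ℝ) (u : V → ℝ) : ℝ :=
  (1 / 2) * ∑ x, ∑ y, (u y - u x) ^ 2 * w x y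

/-- The Dirichlet pairing `⟨du,dv⟩ = ∑_{{x,y}∈E} (u y - u x)(v y - v x) w_{xy}`. -/
noncomputable def dirPairing [Fintype V] (w : V → V → ℝ) (u v : V → ℝ) : ℝ :=
  (1 / 2) * ∑ x, ∑ y, (u y - u x) * (v y - v x) * w x y

/-- The weighted graph Laplacian `Δu(x) = (1/m_x) ∑_y (u y - u x) w_{xy}`. -/
noncomputable def glap [Fintype V] (m : V → ℝ) (w : V → V → ℝ) (u : V → ℝ) (x : V) : ℝ :=
  (1 / m x) * ∑ y, (u y - u x) * w x y

/-- `d_B`, the maximal graph distance between two boundary vertices. -/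
noncomputable def boundaryDiam (G : SimpleGraph V) (B : Finset V) : ℕ :=
  (B ×ˢ B).sup fun p => G.dist p.1 p.2

/-- `w₀`, the minimal edge weight. -/
noncomputable def minEdgeWeight (G : SimpleGraph V) (w : V → V → ℝ) : ℝ :=
  sInf {r : ℝ | ∃ x y, G.Adj x y ∧ w x y = r}

/-- `m₀`, the minimal vertex measure on the boundary. -/
noncomputable def minBoundaryMeasure (B : Finset V) (m : V → ℝ) : ℝ :=
  sInf {r : ℝ | ∃ x ∈ B, m x = r}

/-- The second Steklov eigenvalue `σ₂`, via its variational characterization: the infimum of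
the Rayleigh quotients `E(u)/⟨u,u⟩_B` over functions `u` on `V` whose boundary values are
nonzero and have weighted mean zero.  (Since the harmonic extension minimizes the Dirichlet
energy among all extensions of given boundary data, this agrees with the second eigenvalue of
the Steklov operator.) -/
noncomputable def sigma2 [Fintype V] (B : Finset V) (m : V → ℝ) (w : V → V → ℝ) : ℝ :=
  sInf {r : ℝ | ∃ u : V → ℝ, (∃ x ∈ B, u x ≠ 0) ∧ (∑ x ∈ B, u x * m x = 0) ∧
    r = energy w u / ∑ x ∈ B, (u x) ^ 2 * m x}

section Graph

variable {G : SimpleGraph V} {w : V → V → ℝ}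

lemma minEdgeWeight_nonneg (hw : ∀ x y, G.Adj x y → 0 ≤ w x y) : 0 ≤ minEdgeWeight G w :=
  Real.sInf_nonneg <| by rintro _ ⟨x, y, h, rfl⟩; exact hw x y h

lemma minEdgeWeight_le (hw : ∀ x y, G.Adj x y → 0 ≤ w x y) {x y : V} (h : G.Adj x y) :
    minEdgeWeight G w ≤ w x y :=
  csInf_le ⟨0, by rintro _ ⟨x, y, h, rfl⟩; exact hw x y h⟩ ⟨x, y, h, rfl⟩

lemma dist_le_boundaryDiam {B : Finset V} {x y : V} (hx : x ∈ B) (hy : y ∈ B) :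
    G.dist x y ≤ boundaryDiam G B :=
  Finset.le_sup (f := fun p : V × V ↦ G.dist p.1 p.2) (b := (x, y)) (mem_product.2 ⟨hx, hy⟩)

lemma boundaryDiam_pos (hG : G.Connected) {B : Finset V} (hB : 1 < #B) :
    0 < boundaryDiam G B := by
  obtain ⟨x, hx, y, hy, hxy⟩ := one_lt_card.1 hB
  exact (hG.pos_dist_of_ne hxy).trans_le (dist_le_boundaryDiam hx hy)

variable [Fintype V]

lemma energy_nonneg (hw : ∀ x y, 0 ≤ w x y) (u : V → ℝ) : 0 ≤ energy w u :=
  mul_nonneg (by norm_num) <| sum_nonneg fun x _ ↦ sum_nonneg fun y _ ↦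
    mul_nonneg (sq_nonneg _) (hw x y)

/-- A path traverses each edge at most once and in one direction only. -/
lemma SimpleGraph.Walk.IsPath.two_mul_sum_getVert_le {x y : V} {p : G.Walk x y}
    (hp : p.IsPath) {t : V × V → ℝ} (ht : ∀ r, 0 ≤ t r) (ht_swap : ∀ r, t r.swap = t r) :
    2 * ∑ i ∈ range p.length, t (p.getVert i, p.getVert (i + 1)) ≤ ∑ r, t r := by
  classical
  set f : ℕ → V × V := fun i ↦ (p.getVert i, p.getVert (i + 1))
  have hvert : ∀ {i j}, i ≤ p.length → j ≤ p.length → p.getVert i = p.getVert j → i = j :=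
    fun hi hj h ↦ hp.getVert_injOn hi hj h
  have hf : Set.InjOn f (range p.length) := fun i hi j hj h ↦
    hvert (mem_range.1 hi).le (mem_range.1 hj).le (congrArg Prod.fst h)
  have hg : Set.InjOn (Prod.swap ∘ f) (range p.length) := fun i hi j hj h ↦
    hf hi hj (Prod.swap_injective h)
  have hdisj : Disjoint ((range p.length).image f) ((range p.length).image (Prod.swap ∘ f)) := by
    simp only [Finset.disjoint_left, mem_image, mem_range]
    rintro _ ⟨i, hi, rfl⟩ ⟨j, hj, hji⟩
    simp only [Function.comp_apply, Prod.swap_prod_mk, Prod.mk.injEq, f] at hji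
    have := hvert (by omega) hi.le hji.1
    have := hvert hj.le (by omega) hji.2
    omega
  calc 2 * ∑ i ∈ range p.length, t (f i)
      = ∑ i ∈ range p.length, t (f i) + ∑ i ∈ range p.length, t (Prod.swap (f i)) := by
        simp only [ht_swap, two_mul]
    _ = ∑ r ∈ (range p.length).image f ∪ (range p.length).image (Prod.swap ∘ f), t r := by
        rw [sum_union hdisj, sum_image hf, sum_image hg]
        rfl
    _ ≤ ∑ r, t r := sum_le_univ_sum_of_nonneg ht

lemma SimpleGraph.Walk.IsPath.mul_sq_sub_le_length_mul_energy {x y : V} {p : G.Walk x y}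
    (hp : p.IsPath) (hw : ∀ x y, 0 ≤ w x y) (hw_symm : ∀ x y, w x y = w y x) {w₀ : ℝ}
    (hw₀ : 0 ≤ w₀) (hw₀_le : ∀ x y, G.Adj x y → w₀ ≤ w x y) (u : V → ℝ) :
    w₀ * (u y - u x) ^ 2 ≤ p.length * energy w u := by
  set δ : ℕ → ℝ := fun i ↦ u (p.getVert (i + 1)) - u (p.getVert i)
  have htelescope : ∑ i ∈ range p.length, δ i = u y - u x := by
    simpa only [Function.comp_apply, p.getVert_length, p.getVert_zero] using
      sum_range_sub (u ∘ p.getVert) p.length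
  have hcs : (u y - u x) ^ 2 ≤ p.length * ∑ i ∈ range p.length, δ i ^ 2 := by
    simpa only [htelescope, card_range] using
      sq_sum_le_card_mul_sum_sq (s := range p.length) (f := δ)
  have hpath : w₀ * ∑ i ∈ range p.length, δ i ^ 2 ≤ energy w u := by
    have hsum := hp.two_mul_sum_getVert_le (t := fun r ↦ (u r.2 - u r.1) ^ 2 * w r.1 r.2)
      (fun r ↦ mul_nonneg (sq_nonneg _) (hw _ _))
      (fun r ↦ by simp only [Prod.fst_swap, Prod.snd_swap, hw_symm r.1 r.2]; ring)
    rw [Fintype.sum_prod_type] at hsum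
    calc w₀ * ∑ i ∈ range p.length, δ i ^ 2 = ∑ i ∈ range p.length, δ i ^ 2 * w₀ := by
          rw [mul_sum]; simp only [mul_comm]
      _ ≤ ∑ i ∈ range p.length, δ i ^ 2 * w (p.getVert i) (p.getVert (i + 1)) :=
          sum_le_sum fun i hi ↦ mul_le_mul_of_nonneg_left
            (hw₀_le _ _ (p.adj_getVert_succ (mem_range.1 hi))) (sq_nonneg _)
      _ ≤ energy w u := by rw [energy]; linarith
  calc w₀ * (u y - u x) ^ 2 ≤ w₀ * (p.length * ∑ i ∈ range p.length, δ i ^ 2) := by gcongr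
    _ = p.length * (w₀ * ∑ i ∈ range p.length, δ i ^ 2) := by ring
    _ ≤ p.length * energy w u := by gcongr

lemma SimpleGraph.Connected.mul_sq_sub_le_dist_mul_energy (hG : G.Connected)
    (hw : ∀ x y, 0 ≤ w x y) (hw_symm : ∀ x y, w x y = w y x) {w₀ : ℝ} (hw₀ : 0 ≤ w₀)
    (hw₀_le : ∀ x y, G.Adj x y → w₀ ≤ w x y) (u : V → ℝ) (x y : V) :
    w₀ * (u y - u x) ^ 2 ≤ G.dist x y * energy w u := by
  obtain ⟨p, hp, hlen⟩ := hG.exists_path_of_dist x y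
  rw [← hlen]
  exact hp.mul_sq_sub_le_length_mul_energy hw hw_symm hw₀ hw₀_le u

end Graph

lemma minBoundaryMeasure_le {B : Finset V} {m : V → ℝ} (hm : ∀ x ∈ B, 0 ≤ m x) {x : V}
    (hx : x ∈ B) : minBoundaryMeasure B m ≤ m x :=
  csInf_le ⟨0, by rintro _ ⟨y, hy, rfl⟩; exact hm y hy⟩ ⟨x, hx, rfl⟩

lemma two_mul_minBoundaryMeasure_le_sum {B : Finset V} {m : V → ℝ} (hm : ∀ x ∈ B, 0 ≤ m x)
    (hB : 1 < #B) : 2 * minBoundaryMeasure B m ≤ ∑ x ∈ B, m x := by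
  obtain ⟨x, hx, y, hy, hxy⟩ := one_lt_card.1 hB
  calc 2 * minBoundaryMeasure B m ≤ m x + m y := by
        linarith [minBoundaryMeasure_le hm hx, minBoundaryMeasure_le hm hy]
    _ ≤ ∑ x ∈ B, m x := add_le_sum hm hx hy hxy

/-- The Bhatia–Davis inequality for a mean-zero function with values in `[lo, hi]`, combined with
`-4 lo hi ≤ (hi - lo)²`. -/
lemma four_mul_sum_sq_mul_le_of_sum_mul_eq_zero {ι : Type*} {s : Finset ι} {u m : ι → ℝ}
    {lo hi : ℝ} (hm : ∀ i ∈ s, 0 ≤ m i) (hlo : ∀ i ∈ s, lo ≤ u i) (hhi : ∀ i ∈ s, u i ≤ hi)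
    (hmean : ∑ i ∈ s, u i * m i = 0) :
    4 * ∑ i ∈ s, u i ^ 2 * m i ≤ (hi - lo) ^ 2 * ∑ i ∈ s, m i := by
  have hpoint : ∀ i ∈ s, u i ^ 2 * m i ≤ (hi + lo) * (u i * m i) - hi * lo * m i := fun i hi' ↦ by
    have : 0 ≤ (hi - u i) * (u i - lo) :=
      mul_nonneg (sub_nonneg.2 (hhi i hi')) (sub_nonneg.2 (hlo i hi'))
    nlinarith [hm i hi']
  have hsum := sum_le_sum hpoint
  rw [sum_sub_distrib, ← mul_sum, ← mul_sum, hmean] at hsum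
  nlinarith [sq_nonneg (hi + lo), sum_nonneg hm]

lemma exists_ne_zero_sum_mul_eq_zero {ι : Type*} {s : Finset ι} (hs : 1 < #s) {m : ι → ℝ}
    (hm : ∀ i ∈ s, m i ≠ 0) : ∃ u : ι → ℝ, (∃ i ∈ s, u i ≠ 0) ∧ ∑ i ∈ s, u i * m i = 0 := by
  classical
  obtain ⟨i, hi, j, hj, hij⟩ := one_lt_card.1 hs
  refine ⟨Pi.single i (m j) - Pi.single j (m i), ⟨i, hi, by simpa [hij] using hm j hj⟩, ?_⟩
  simp only [Pi.sub_apply, sub_mul, sum_sub_distrib, Pi.single_apply, ite_mul, zero_mul,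
    sum_ite_eq', hi, hj, if_true]
  ring

theorem perrin_bound_le_rayleigh_quotient [Fintype V] {G : SimpleGraph V} (hG : G.Connected)
    {B : Finset V} (hB : 1 < #B) {m : V → ℝ} {w : V → V → ℝ} (hm : ∀ x ∈ B, 0 < m x)
    (hw : ∀ x y, 0 ≤ w x y) (hw_symm : ∀ x y, w x y = w y x) {u : V → ℝ}
    (hu : ∃ x ∈ B, u x ≠ 0) (hmean : ∑ x ∈ B, u x * m x = 0) :
    minEdgeWeight G w * (∑ x ∈ B, m x) /
        (((∑ x ∈ B, m x) - minBoundaryMeasure B m) ^ 2 * (boundaryDiam G B : ℝ))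
      ≤ energy w u / ∑ x ∈ B, u x ^ 2 * m x := by
  obtain ⟨z, hzB, hz⟩ := hu
  obtain ⟨x₀, hx₀, hmax⟩ := B.exists_max_image u ⟨z, hzB⟩
  obtain ⟨y₀, hy₀, hmin⟩ := B.exists_min_image u ⟨z, hzB⟩
  set VB := ∑ x ∈ B, m x
  set w₀ := minEdgeWeight G w
  have hm' : ∀ x ∈ B, 0 ≤ m x := fun x hx ↦ (hm x hx).le
  have hVB : 0 < VB := sum_pos hm ⟨z, hzB⟩
  have hN : 0 < ∑ x ∈ B, u x ^ 2 * m x :=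
    sum_pos' (fun x hx ↦ mul_nonneg (sq_nonneg _) (hm' x hx))
      ⟨z, hzB, mul_pos (by positivity) (hm z hzB)⟩
  have hd : (0 : ℝ) < boundaryDiam G B := by exact_mod_cast boundaryDiam_pos hG hB
  have hw₀ : 0 ≤ w₀ := minEdgeWeight_nonneg fun x y _ ↦ hw x y
  have hm₀ := two_mul_minBoundaryMeasure_le_sum hm' hB
  have hvol : VB ^ 2 ≤ 4 * (VB - minBoundaryMeasure B m) ^ 2 := by nlinarith
  have hboundary := four_mul_sum_sq_mul_le_of_sum_mul_eq_zero hm' hmin hmax hmean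
  have henergy : w₀ * (u x₀ - u y₀) ^ 2 ≤ boundaryDiam G B * energy w u :=
    (hG.mul_sq_sub_le_dist_mul_energy hw hw_symm hw₀
      (fun x y h ↦ minEdgeWeight_le (fun x y _ ↦ hw x y) h) u y₀ x₀).trans <|
      mul_le_mul_of_nonneg_right (by exact_mod_cast dist_le_boundaryDiam hy₀ hx₀)
        (energy_nonneg hw u)
  have hgap : 0 < VB - minBoundaryMeasure B m := by linarith
  rw [div_le_div_iff₀ (by positivity) hN]
  refine le_of_mul_le_mul_left ?_ (by norm_num : (0 : ℝ) < 4)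
  calc 4 * (w₀ * VB * ∑ x ∈ B, u x ^ 2 * m x)
      = w₀ * VB * (4 * ∑ x ∈ B, u x ^ 2 * m x) := by ring
    _ ≤ w₀ * VB * ((u x₀ - u y₀) ^ 2 * VB) := by gcongr
    _ = w₀ * (u x₀ - u y₀) ^ 2 * VB ^ 2 := by ring
    _ ≤ w₀ * (u x₀ - u y₀) ^ 2 * (4 * (VB - minBoundaryMeasure B m) ^ 2) := by gcongr
    _ ≤ boundaryDiam G B * energy w u * (4 * (VB - minBoundaryMeasure B m) ^ 2) := by gcongr
    _ = 4 * (energy w u * ((VB - minBoundaryMeasure B m) ^ 2 * boundaryDiam G B)) := by ring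

/-- **Extension of Perrin's bound to general weights** (Theorem 1.3).
For a connected weighted finite graph with boundary `B`, `|B| ≥ 2` (no assumption that
`E(B,B) = ∅`), one has `σ₂ ≥ w₀ V_B / ((V_B - m₀)² d_B)` where `V_B = ∑_{x∈B} m_x`,
`m₀ = min_{x∈B} m_x` and `w₀ = min_{e∈E} w_e`. -/
theorem extended_perrin_lower_bound [Fintype V]
    (G : SimpleGraph V) (hG : G.Connected)
    (B : Finset V) (hB : 2 ≤ B.card)
    (m : V → ℝ) (w : V → V → ℝ)
    (hm : ∀ x, 0 < m x)
    (hw_symm : ∀ x y, w x y = w y x)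
    (hw_pos : ∀ x y, G.Adj x y → 0 < w x y)
    (hw_zero : ∀ x y, ¬ G.Adj x y → w x y = 0) :
    sigma2 B m w ≥
      minEdgeWeight G w * (∑ x ∈ B, m x) /
        (((∑ x ∈ B, m x) - minBoundaryMeasure B m) ^ 2 * (boundaryDiam G B : ℝ)) := by
  have hw : ∀ x y, 0 ≤ w x y := fun x y ↦ by
    by_cases h : G.Adj x y
    · exact (hw_pos x y h).le
    · exact (hw_zero x y h).ge
  obtain ⟨u₀, hu₀, hmean₀⟩ := exists_ne_zero_sum_mul_eq_zero hB fun x _ ↦ (hm x).ne'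
  refine le_csInf ⟨_, u₀, hu₀, hmean₀, rfl⟩ ?_
  rintro _ ⟨u, hu, hmean, rfl⟩
  exact perrin_bound_le_rayleigh_quotient hG hB (fun x _ ↦ hm x) hw hw_symm hu hmean
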